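/- arXiv:2602.19236 — 3 statements merged into one kernel-verified Lean document; each statement's English description precedes it below -/
import Mathlib

section
/- Let C(Γ), C(Γ̃) be symmetric positive definite N×N matrices with λ_min ≥ 1 and operator norms at most c_* = 1 + b²c̆, and suppose ‖C(Γ) − C(Γ̃)‖ ≤ 2b c̆ ‖Γ − Γ̃‖. With C̃(·) = U^⊤ C(·) U for a fixed orthogonal U, and A(·) = C̃₁₂(·) C̃₂₂(·)^{-1} the corresponding block ratios, one has ‖A(Γ) − A(Γ̃)‖ ≤ (2 + b²c̆) · 2b c̆ · ‖Γ − Γ̃‖ = (4b c̆ + 2b³ c̆²) ‖Γ − Γ̃‖. -/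
open Matrix
open scoped Matrix.Norms.L2Operator ComplexOrder

/-!
By the resolvent identity `X⁻¹ - X̃⁻¹ = X⁻¹ (X̃ - X) X̃⁻¹`,
`B X⁻¹ - B̃ X̃⁻¹ = (B - B̃) X⁻¹ + B̃ X⁻¹ (X̃ - X) X̃⁻¹`, so the block ratios differ by at most
`‖B - B̃‖ + ‖B̃‖ ‖X̃ - X‖` as soon as `‖X⁻¹‖, ‖X̃⁻¹‖ ≤ 1`, which holds when `X ≥ 1`.
Conjugating by an isometry and restricting to a block (a submatrix) do not increase the L2
operator norm and preserve `C ≥ 1`, so the blocks `B = C̃₁₂` and `X = C̃₂₂` inherit the bounds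
assumed on `C`.
-/

open RCLike in
theorem ContinuousLinearMap.norm_le_norm_apply_of_isPositive_sub_one {𝕜 E : Type*} [RCLike 𝕜]
    [NormedAddCommGroup E] [InnerProductSpace 𝕜 E] {T : E →L[𝕜] E} (hT : (T - 1).IsPositive)
    (x : E) : ‖x‖ ≤ ‖T x‖ := by
  have hx : ‖x‖ * ‖x‖ ≤ ‖x‖ * ‖T x‖ :=
    calc ‖x‖ * ‖x‖ = re (inner 𝕜 x x) := (inner_self_eq_norm_mul_norm x).symm
      _ ≤ re (inner 𝕜 x (T x)) := by
        have := hT.re_inner_nonneg_right x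
        rw [_root_.sub_apply, one_apply_eq_self, inner_sub_right, map_sub] at this
        linarith
      _ ≤ ‖x‖ * ‖T x‖ := re_inner_le_norm x (T x)
  rcases (norm_nonneg x).eq_or_lt with h0 | h0
  · exact h0 ▸ norm_nonneg _
  · exact le_of_mul_le_mul_left hx h0

namespace Matrix

theorem l2_opNorm_one_le {𝕜 n : Type*} [RCLike 𝕜] [Fintype n] [DecidableEq n] :
    ‖(1 : Matrix n n 𝕜)‖ ≤ 1 := by
  rw [cstar_norm_def, map_one]
  exact ContinuousLinearMap.norm_id_le

theorem l2_opNorm_le_one_of_conjTranspose_mul_self_eq_one {𝕜 m n : Type*} [RCLike 𝕜] [Fintype m]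
    [Fintype n] [DecidableEq n] {A : Matrix m n 𝕜} (hA : Aᴴ * A = 1) : ‖A‖ ≤ 1 := by
  have h := l2_opNorm_conjTranspose_mul_self A
  rw [hA] at h
  nlinarith [norm_nonneg A, l2_opNorm_one_le (𝕜 := 𝕜) (n := n)]

theorem l2_opNorm_one_submatrix_le_one {𝕜 m n : Type*} [RCLike 𝕜] [Fintype m] [Fintype n]
    [DecidableEq m] [DecidableEq n] {f : m → n} (hf : Function.Injective f) :
    ‖(1 : Matrix n n 𝕜).submatrix id f‖ ≤ 1 := by
  refine l2_opNorm_le_one_of_conjTranspose_mul_self_eq_one ?_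
  rw [conjTranspose_submatrix, conjTranspose_one, ← submatrix_mul _ _ _ _ _ Function.bijective_id,
    Matrix.one_mul, submatrix_one _ hf]

theorem submatrix_eq_one_submatrix_conjTranspose_mul_mul {α l m n o : Type*} [Semiring α]
    [StarRing α] [Fintype m] [Fintype n] [DecidableEq m] [DecidableEq n]
    (M : Matrix m n α) (e : l → m) (f : o → n) :
    M.submatrix e f =
      ((1 : Matrix m m α).submatrix id e)ᴴ * M * (1 : Matrix n n α).submatrix id f := by
  ext i j
  simp [mul_apply, one_apply]

theorem l2_opNorm_submatrix_le {𝕜 l m n o : Type*} [RCLike 𝕜] [Fintype l] [Fintype m] [Fintype n]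
    [Fintype o] [DecidableEq l] [DecidableEq m] [DecidableEq n] [DecidableEq o]
    (M : Matrix m n 𝕜) {e : l → m} {f : o → n}
    (he : Function.Injective e) (hf : Function.Injective f) : ‖M.submatrix e f‖ ≤ ‖M‖ := by
  rw [submatrix_eq_one_submatrix_conjTranspose_mul_mul]
  calc _ ≤ ‖((1 : Matrix m m 𝕜).submatrix id e)ᴴ‖ * ‖M‖ * ‖(1 : Matrix n n 𝕜).submatrix id f‖ :=
        (l2_opNorm_mul _ _).trans (by gcongr; exact l2_opNorm_mul _ _)
    _ ≤ 1 * ‖M‖ * 1 := by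
        rw [l2_opNorm_conjTranspose]
        gcongr
        exacts [l2_opNorm_one_submatrix_le_one he, l2_opNorm_one_submatrix_le_one hf]
    _ = ‖M‖ := by ring

theorem l2_opNorm_conjTranspose_mul_mul_le {𝕜 m n : Type*} [RCLike 𝕜] [Fintype m] [Fintype n]
    [DecidableEq m] [DecidableEq n] {U : Matrix n m 𝕜} (hU : Uᴴ * U = 1) (M : Matrix n n 𝕜) :
    ‖Uᴴ * M * U‖ ≤ ‖M‖ := by
  have hU' : ‖U‖ ≤ 1 := l2_opNorm_le_one_of_conjTranspose_mul_self_eq_one hU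
  calc _ ≤ ‖Uᴴ‖ * ‖M‖ * ‖U‖ := (l2_opNorm_mul _ _).trans (by gcongr; exact l2_opNorm_mul _ _)
    _ ≤ 1 * ‖M‖ * 1 := by rw [l2_opNorm_conjTranspose]; gcongr
    _ = ‖M‖ := by ring

theorem isUnit_of_posSemidef_sub_one {𝕜 n : Type*} [RCLike 𝕜] [Fintype n] [DecidableEq n]
    {X : Matrix n n 𝕜} (hX : (X - 1).PosSemidef) : IsUnit X := by
  simpa using (PosDef.one.add_posSemidef hX).isUnit

theorem l2_opNorm_inv_le_one_of_posSemidef_sub_one {𝕜 n : Type*} [RCLike 𝕜] [Fintype n]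
    [DecidableEq n] {X : Matrix n n 𝕜} (hX : (X - 1).PosSemidef) : ‖X⁻¹‖ ≤ 1 := by
  have hpos : (toEuclideanCLM (𝕜 := 𝕜) X - 1).IsPositive := by
    rw [← map_one (toEuclideanCLM (𝕜 := 𝕜) (n := n)), ← map_sub]
    exact isPositive_toEuclideanLin_iff.mpr hX
  have hinv : toEuclideanCLM (𝕜 := 𝕜) X * toEuclideanCLM (𝕜 := 𝕜) X⁻¹ = 1 := by
    rw [← map_mul, mul_nonsing_inv _ ((isUnit_iff_isUnit_det X).mp
      (isUnit_of_posSemidef_sub_one hX)), map_one]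
  rw [cstar_norm_def]
  refine ContinuousLinearMap.opNorm_le_bound _ zero_le_one fun y => ?_
  calc _ ≤ ‖toEuclideanCLM (𝕜 := 𝕜) X (toEuclideanCLM (𝕜 := 𝕜) X⁻¹ y)‖ :=
        ContinuousLinearMap.norm_le_norm_apply_of_isPositive_sub_one hpos _
    _ = 1 * ‖y‖ := by rw [← mul_apply_eq_comp, hinv, one_apply_eq_self, one_mul]

theorem PosSemidef.conjTranspose_mul_mul_sub_one {R m n : Type*} [CommRing R] [PartialOrder R]
    [StarRing R] [Finite m] [Fintype n] [DecidableEq m] [DecidableEq n] {C : Matrix n n R}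
    (hC : (C - 1).PosSemidef) {U : Matrix n m R} (hU : Uᴴ * U = 1) :
    (Uᴴ * C * U - 1).PosSemidef := by
  have h : Uᴴ * C * U - 1 = Uᴴ * (C - 1) * U := by
    rw [Matrix.mul_sub, Matrix.sub_mul, Matrix.mul_one, hU]
  rw [h]
  exact hC.conjTranspose_mul_mul_same U

theorem PosSemidef.submatrix_sub_one {R m n : Type*} [Ring R] [PartialOrder R] [StarRing R]
    [DecidableEq m] [DecidableEq n] {C : Matrix n n R} (hC : (C - 1).PosSemidef) {f : m → n}
    (hf : Function.Injective f) : (C.submatrix f f - 1).PosSemidef := by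
  simpa [submatrix_sub, submatrix_one _ hf] using hC.submatrix f

theorem l2_opNorm_mul_inv_sub_mul_inv_le {𝕜 m n : Type*} [RCLike 𝕜] [Fintype m] [Fintype n]
    [DecidableEq n] (B Bt : Matrix m n 𝕜) {X Xt : Matrix n n 𝕜} (hX : (X - 1).PosSemidef)
    (hXt : (Xt - 1).PosSemidef) : ‖B * X⁻¹ - Bt * Xt⁻¹‖ ≤ ‖B - Bt‖ + ‖Bt‖ * ‖Xt - X‖ := by
  have hsplit : B * X⁻¹ - Bt * Xt⁻¹ = (B - Bt) * X⁻¹ + Bt * (X⁻¹ * (Xt - X) * Xt⁻¹) := by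
    rw [← inv_sub_inv (iff_of_true (isUnit_of_posSemidef_sub_one hX)
      (isUnit_of_posSemidef_sub_one hXt)), Matrix.sub_mul, Matrix.mul_sub]
    abel
  have hXinv := l2_opNorm_inv_le_one_of_posSemidef_sub_one hX
  have hXtinv := l2_opNorm_inv_le_one_of_posSemidef_sub_one hXt
  calc ‖B * X⁻¹ - Bt * Xt⁻¹‖
      ≤ ‖B - Bt‖ * ‖X⁻¹‖ + ‖Bt‖ * (‖X⁻¹‖ * ‖Xt - X‖ * ‖Xt⁻¹‖) := by
        rw [hsplit]
        refine (norm_add_le _ _).trans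
          (add_le_add (l2_opNorm_mul _ _) ((l2_opNorm_mul _ _).trans ?_))
        gcongr
        exact (l2_opNorm_mul _ _).trans (by gcongr; exact l2_opNorm_mul _ _)
    _ ≤ ‖B - Bt‖ * 1 + ‖Bt‖ * (1 * ‖Xt - X‖ * 1) := by gcongr
    _ = ‖B - Bt‖ + ‖Bt‖ * ‖Xt - X‖ := by ring

end Matrix

theorem block_ratio_lipschitz_general (p r k : ℕ) (b c : ℝ)
    (CF : Matrix (Fin k) (Fin k) ℝ → Matrix (Fin p ⊕ Fin r) (Fin p ⊕ Fin r) ℝ)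
    (U : Matrix (Fin p ⊕ Fin r) (Fin p ⊕ Fin r) ℝ) (hU : Uᵀ * U = 1)
    (Γ Γt : Matrix (Fin k) (Fin k) ℝ)
    (hminΓ : (CF Γ - 1).PosSemidef) (hminΓt : (CF Γt - 1).PosSemidef)
    (hnΓt : ‖CF Γt‖ ≤ 1 + b ^ 2 * c)
    (hlip : ‖CF Γ - CF Γt‖ ≤ 2 * b * c * ‖Γ - Γt‖) :
    ‖(Uᵀ * CF Γ * U).toBlocks₁₂ * ((Uᵀ * CF Γ * U).toBlocks₂₂)⁻¹ -
        (Uᵀ * CF Γt * U).toBlocks₁₂ * ((Uᵀ * CF Γt * U).toBlocks₂₂)⁻¹‖ ≤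
      (4 * b * c + 2 * b ^ 3 * c ^ 2) * ‖Γ - Γt‖ := by
  rw [← conjTranspose_eq_transpose_of_trivial] at hU ⊢
  set C := Uᴴ * CF Γ * U
  set Ct := Uᴴ * CF Γt * U
  have hX : (C.toBlocks₂₂ - 1).PosSemidef :=
    (hminΓ.conjTranspose_mul_mul_sub_one hU).submatrix_sub_one Sum.inr_injective
  have hXt : (Ct.toBlocks₂₂ - 1).PosSemidef :=
    (hminΓt.conjTranspose_mul_mul_sub_one hU).submatrix_sub_one Sum.inr_injective
  have hdiff : ‖C - Ct‖ ≤ 2 * b * c * ‖Γ - Γt‖ := by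
    rw [← Matrix.sub_mul, ← Matrix.mul_sub]
    exact (l2_opNorm_conjTranspose_mul_mul_le hU _).trans hlip
  have hB : ‖C.toBlocks₁₂ - Ct.toBlocks₁₂‖ ≤ 2 * b * c * ‖Γ - Γt‖ :=
    (l2_opNorm_submatrix_le (C - Ct) Sum.inl_injective Sum.inr_injective).trans hdiff
  have hXdiff : ‖Ct.toBlocks₂₂ - C.toBlocks₂₂‖ ≤ 2 * b * c * ‖Γ - Γt‖ :=
    (l2_opNorm_submatrix_le (Ct - C) Sum.inr_injective Sum.inr_injective).trans
      (norm_sub_rev C Ct ▸ hdiff)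
  have hBt : ‖Ct.toBlocks₁₂‖ ≤ 1 + b ^ 2 * c :=
    (l2_opNorm_submatrix_le Ct Sum.inl_injective Sum.inr_injective).trans
      ((l2_opNorm_conjTranspose_mul_mul_le hU _).trans hnΓt)
  calc _ ≤ _ := l2_opNorm_mul_inv_sub_mul_inv_le _ _ hX hXt
    _ ≤ 2 * b * c * ‖Γ - Γt‖ + (1 + b ^ 2 * c) * (2 * b * c * ‖Γ - Γt‖) := by
        gcongr
        exact (norm_nonneg _).trans hBt
    _ = (4 * b * c + 2 * b ^ 3 * c ^ 2) * ‖Γ - Γt‖ := by ring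

/-- Perturbation bound for the block ratio `A(Γ) = C̃₁₂(Γ) C̃₂₂(Γ)⁻¹`, where
`C̃(Γ) = Uᵀ C(Γ) U`: if `C(Γ)` and `C(Γ̃)` are positive definite with smallest eigenvalue
at least `1`, operator norms at most `1 + b² c̆`, and `‖C(Γ) - C(Γ̃)‖ ≤ 2 b c̆ ‖Γ - Γ̃‖`,
then `‖A(Γ) - A(Γ̃)‖ ≤ (4 b c̆ + 2 b³ c̆²) ‖Γ - Γ̃‖`. -/
theorem block_ratio_lipschitz (p r k : ℕ) (b c : ℝ) (hb : 0 < b) (hc : 0 < c)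
    (CF : Matrix (Fin k) (Fin k) ℝ → Matrix (Fin p ⊕ Fin r) (Fin p ⊕ Fin r) ℝ)
    (U : Matrix (Fin p ⊕ Fin r) (Fin p ⊕ Fin r) ℝ) (hU : Uᵀ * U = 1)
    (Γ Γt : Matrix (Fin k) (Fin k) ℝ)
    (hpdΓ : (CF Γ).PosDef) (hpdΓt : (CF Γt).PosDef)
    (hminΓ : (CF Γ - 1).PosSemidef) (hminΓt : (CF Γt - 1).PosSemidef)
    (hnΓ : ‖CF Γ‖ ≤ 1 + b ^ 2 * c) (hnΓt : ‖CF Γt‖ ≤ 1 + b ^ 2 * c)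
    (hlip : ‖CF Γ - CF Γt‖ ≤ 2 * b * c * ‖Γ - Γt‖) :
    ‖(Uᵀ * CF Γ * U).toBlocks₁₂ * ((Uᵀ * CF Γ * U).toBlocks₂₂)⁻¹ -
        (Uᵀ * CF Γt * U).toBlocks₁₂ * ((Uᵀ * CF Γt * U).toBlocks₂₂)⁻¹‖ ≤
      (4 * b * c + 2 * b ^ 3 * c ^ 2) * ‖Γ - Γt‖ :=
  block_ratio_lipschitz_general p r k b c CF U hU Γ Γt hminΓ hminΓt hnΓt hlip
end

section
/- Under the setup of the previous statement, ‖(Xδ²ΛX^⊤ + C)^{-1}Xβ⁰‖² ≤ (1 + ‖C̃₁₂C̃₂₂^{-1}‖²) · β⁰ᵀ V D F^{-2} D V^⊤ β⁰, and β⁰ᵀ V D F^{-2} D V^⊤ β⁰ ≤ (λ_max(D)² / λ_min(D̃)²) ‖β⁰‖² = κ(X)⁴ ‖β⁰‖² when δ²Λ = δ² I (up to the bound λ_max(D̃) ≤ a^{-1}δ²s_max(X)², λ_min(D̃) ≥ aδ²s_min(X)²). -/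
open Matrix
open scoped Matrix.Norms.L2Operator

/-!
Conjugating by `U` turns `X δ²Λ Xᵀ + C` into the block matrix with blocks `D̃ + C̃₁₁`, `C̃₁₂`,
`C̃₁₂ᵀ`, `C̃₂₂`, whose Schur complement with respect to `C̃₂₂` is `F`. Block elimination gives
`(X δ²Λ Xᵀ + C)⁻¹ X = U [G; -C̃₂₂⁻¹ C̃₁₂ᵀ G]` with `G = F⁻¹ D Vᵀ`, and
`β⁰ᵀ V D F⁻² D Vᵀ β⁰ = ‖G β⁰‖²`; this is the first bound. For the second, `F = D̃ + S` with `S`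
the Schur complement of the positive definite `C̃`, so for every `w`
`λ_min(D̃) ‖w‖² ≤ wᵀ D̃ w ≤ wᵀ F w ≤ ‖w‖ ‖F w‖`, i.e. `‖F⁻¹ u‖ ≤ ‖u‖ / λ_min(D̃)`, and
`‖D Vᵀ β⁰‖ ≤ λ_max(D) ‖β⁰‖`.
-/

namespace Matrix

variable {m m' n k : Type*}

lemma toBlocks₂₁_eq_transpose_toBlocks₁₂ {α : Type*} {M : Matrix (m ⊕ n) (m ⊕ n) α}
    (hM : Mᵀ = M) : M.toBlocks₂₁ = M.toBlocks₁₂ᵀ := by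
  nth_rw 1 [← hM]
  rfl

lemma PosDef.transpose_eq {M : Matrix n n ℝ} (hM : M.PosDef) : Mᵀ = M :=
  (conjTranspose_eq_transpose_of_trivial M).symm.trans hM.isHermitian

lemma PosDef.toBlocks₂₂ {M : Matrix (m ⊕ n) (m ⊕ n) ℝ} (hM : M.PosDef) : M.toBlocks₂₂.PosDef :=
  hM.submatrix Sum.inr_injective

variable [Fintype m] [Fintype m'] [Fintype n]

lemma sum_sq_eq_dotProduct_self (x : n → ℝ) : ∑ i, x i ^ 2 = x ⬝ᵥ x := by
  simp only [dotProduct, sq]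

lemma sum_sq_mulVec_eq_dotProduct_mulVec (B : Matrix m n ℝ) (x : n → ℝ) :
    ∑ i, (B *ᵥ x) i ^ 2 = x ⬝ᵥ (Bᵀ * B) *ᵥ x := by
  rw [sum_sq_eq_dotProduct_self, ← mulVec_mulVec, dotProduct_mulVec x, vecMul_transpose]

lemma sum_sq_mulVec_of_transpose_mul_self_eq_one [DecidableEq n] {U : Matrix m n ℝ}
    (hU : Uᵀ * U = 1) (x : n → ℝ) : ∑ i, (U *ᵥ x) i ^ 2 = ∑ i, x i ^ 2 := by
  rw [sum_sq_mulVec_eq_dotProduct_mulVec, hU, one_mulVec, sum_sq_eq_dotProduct_self]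

lemma sum_sq_mulVec_le_l2_opNorm [DecidableEq n] (A : Matrix m n ℝ) (x : n → ℝ) :
    ∑ i, (A *ᵥ x) i ^ 2 ≤ ‖A‖ ^ 2 * ∑ i, x i ^ 2 := by
  have h := pow_le_pow_left₀ (norm_nonneg _) (A.l2_opNorm_mulVec (WithLp.toLp 2 x)) 2
  simpa [mul_pow, EuclideanSpace.real_norm_sq_eq] using h

lemma l2_opNorm_transpose [DecidableEq m] [DecidableEq n] (A : Matrix m n ℝ) : ‖Aᵀ‖ = ‖A‖ := by
  rw [← conjTranspose_eq_transpose_of_trivial, l2_opNorm_conjTranspose]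

lemma sum_sq_fromRows_mulVec (A : Matrix m n ℝ) (B : Matrix m' n ℝ) (x : n → ℝ) :
    ∑ i, (fromRows A B *ᵥ x) i ^ 2 = ∑ i, (A *ᵥ x) i ^ 2 + ∑ i, (B *ᵥ x) i ^ 2 := by
  simp only [fromRows_mulVec, Fintype.sum_sum_type, Sum.elim_inl, Sum.elim_inr]

lemma sum_sq_fromRows_neg_mul_mulVec_le [DecidableEq m] (W : Matrix m n ℝ) (K : Matrix m' m ℝ)
    (x : n → ℝ) :
    ∑ i, (fromRows W (-(K * W)) *ᵥ x) i ^ 2 ≤ (1 + ‖K‖ ^ 2) * ∑ i, (W *ᵥ x) i ^ 2 := by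
  have hK := sum_sq_mulVec_le_l2_opNorm K (W *ᵥ x)
  rw [sum_sq_fromRows_mulVec, neg_mulVec, ← mulVec_mulVec]
  simp only [Pi.neg_apply, neg_sq]
  linarith

lemma sum_sq_diagonal_mulVec_le [DecidableEq n] {d : n → ℝ} (hd : ∀ i, 0 ≤ d i) (x : n → ℝ) :
    ∑ i, (diagonal d *ᵥ x) i ^ 2 ≤ (⨆ i, d i) ^ 2 * ∑ i, x i ^ 2 := by
  rw [Finset.mul_sum]
  refine Finset.sum_le_sum fun i _ => ?_
  rw [mulVec_diagonal, mul_pow]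
  gcongr
  · exact hd i
  · exact le_ciSup (Finite.bddAbove_range d) i

lemma IsHermitian.posSemidef_sub_iInf_eigenvalues [DecidableEq n] {A : Matrix n n ℝ}
    (hA : A.IsHermitian) : (A - algebraMap ℝ _ (⨅ i, hA.eigenvalues i)).PosSemidef := by
  refine posSemidef_iff_isHermitian_and_spectrum_nonneg.2
    ⟨hA.sub (IsSelfAdjoint.algebraMap (Matrix n n ℝ) (.all (⨅ i, hA.eigenvalues i))), ?_⟩
  rw [← spectrum.sub_singleton_eq, hA.spectrum_real_eq_range_eigenvalues]
  rintro _ ⟨_, ⟨i, rfl⟩, _, rfl, rfl⟩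
  exact sub_nonneg.2 (ciInf_le (Finite.bddBelow_range hA.eigenvalues) i)

lemma IsHermitian.iInf_eigenvalues_mul_sum_sq_le [DecidableEq n] {A : Matrix n n ℝ}
    (hA : A.IsHermitian) (x : n → ℝ) :
    (⨅ i, hA.eigenvalues i) * ∑ i, x i ^ 2 ≤ x ⬝ᵥ A *ᵥ x := by
  have h := hA.posSemidef_sub_iInf_eigenvalues.dotProduct_mulVec_nonneg x
  rw [star_trivial, sub_mulVec, Algebra.algebraMap_eq_smul_one, smul_mulVec, one_mulVec,
    dotProduct_sub, dotProduct_smul, smul_eq_mul] at h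
  rw [sum_sq_eq_dotProduct_self]
  linarith

lemma PosSemidef.sq_iInf_eigenvalues_mul_sum_sq_le_add_mulVec [DecidableEq n]
    {A S : Matrix n n ℝ} (hA : A.PosSemidef) (hS : S.PosSemidef) (w : n → ℝ) :
    (⨅ i, hA.isHermitian.eigenvalues i) ^ 2 * ∑ i, w i ^ 2 ≤ ∑ i, ((A + S) *ᵥ w) i ^ 2 := by
  set μ := ⨅ i, hA.isHermitian.eigenvalues i
  have hμ : 0 ≤ μ := Real.iInf_nonneg hA.eigenvalues_nonneg
  have hw : 0 ≤ ∑ i, w i ^ 2 := by positivity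
  have hSw : 0 ≤ w ⬝ᵥ S *ᵥ w := by simpa using hS.dotProduct_mulVec_nonneg w
  have hlow : μ * ∑ i, w i ^ 2 ≤ w ⬝ᵥ (A + S) *ᵥ w := by
    rw [add_mulVec, dotProduct_add]
    linarith [hA.isHermitian.iInf_eigenvalues_mul_sum_sq_le w]
  have hCS : (w ⬝ᵥ (A + S) *ᵥ w) ^ 2 ≤ (∑ i, w i ^ 2) * ∑ i, ((A + S) *ᵥ w) i ^ 2 :=
    Finset.sum_mul_sq_le_sq_mul_sq _ _ _
  rcases hw.eq_or_lt with hw0 | hwpos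
  · rw [← hw0, mul_zero]
    positivity
  · refine le_of_mul_le_mul_right ?_ hwpos
    calc μ ^ 2 * (∑ i, w i ^ 2) * ∑ i, w i ^ 2 = (μ * ∑ i, w i ^ 2) ^ 2 := by ring
      _ ≤ (w ⬝ᵥ (A + S) *ᵥ w) ^ 2 := pow_le_pow_left₀ (by positivity) hlow 2
      _ ≤ _ := by linarith

lemma PosDef.sum_sq_inv_add_mulVec_le [DecidableEq n] {A S : Matrix n n ℝ}
    (hA : A.PosDef) (hS : S.PosSemidef) (u : n → ℝ) :
    ∑ i, ((A + S)⁻¹ *ᵥ u) i ^ 2 ≤ (∑ i, u i ^ 2) / (⨅ i, hA.isHermitian.eigenvalues i) ^ 2 := by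
  cases isEmpty_or_nonempty n
  · simp
  obtain ⟨j, hj⟩ := exists_eq_ciInf_of_finite (f := hA.isHermitian.eigenvalues)
  have hμ : 0 < ⨅ i, hA.isHermitian.eigenvalues i := hj ▸ hA.eigenvalues_pos j
  rw [le_div_iff₀ (by positivity), mul_comm]
  simpa only [mulVec_mulVec, mul_nonsing_inv _ (hA.add_posSemidef hS).det_pos.ne'.isUnit,
    one_mulVec] using
    hA.posSemidef.sq_iInf_eigenvalues_mul_sum_sq_le_add_mulVec hS ((A + S)⁻¹ *ᵥ u)

lemma PosDef.transpose_mul_mul_of_isUnit [DecidableEq n] {A B : Matrix n n ℝ} (hA : A.PosDef)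
    (hB : IsUnit B) : (Bᵀ * A * B).PosDef := by
  rw [← conjTranspose_eq_transpose_of_trivial]
  exact hA.conjTranspose_mul_mul_same (mulVec_injective_iff_isUnit.2 hB)

lemma PosDef.posSemidef_toBlocks₁₁_sub [DecidableEq n] {M : Matrix (m ⊕ n) (m ⊕ n) ℝ}
    (hM : M.PosDef) :
    (M.toBlocks₁₁ - M.toBlocks₁₂ * M.toBlocks₂₂⁻¹ * M.toBlocks₁₂ᵀ).PosSemidef := by
  have : Invertible M.toBlocks₂₂ := hM.toBlocks₂₂.isUnit.invertible
  have hblocks : M = fromBlocks M.toBlocks₁₁ M.toBlocks₁₂ M.toBlocks₁₂ᴴ M.toBlocks₂₂ := by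
    rw [conjTranspose_eq_transpose_of_trivial,
      ← toBlocks₂₁_eq_transpose_toBlocks₁₂ hM.transpose_eq, fromBlocks_toBlocks]
  rw [← conjTranspose_eq_transpose_of_trivial]
  exact (PosDef.fromBlocks₂₂ _ _ hM.toBlocks₂₂).1 (hblocks ▸ hM.posSemidef)

lemma fromBlocks_mul_fromRows_schur {α : Type*} [CommRing α] [DecidableEq m] [DecidableEq n]
    {A : Matrix m m α} {B : Matrix m n α} {C : Matrix n m α} {D : Matrix n n α}
    (hD : IsUnit D.det) (hS : IsUnit (A - B * D⁻¹ * C).det) (W : Matrix m k α) :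
    fromBlocks A B C D *
        fromRows ((A - B * D⁻¹ * C)⁻¹ * W) (-(D⁻¹ * C * ((A - B * D⁻¹ * C)⁻¹ * W))) =
      fromRows W 0 := by
  set Y := (A - B * D⁻¹ * C)⁻¹ * W
  have hY : (A - B * D⁻¹ * C) * Y = W := mul_nonsing_inv_cancel_left _ W hS
  rw [fromBlocks_mul_fromRows, Matrix.mul_neg, Matrix.mul_neg, ← Matrix.mul_assoc D,
    ← Matrix.mul_assoc D, mul_nonsing_inv _ hD, Matrix.one_mul, add_neg_cancel, ← hY,
    ← sub_eq_add_neg, Matrix.sub_mul, Matrix.mul_assoc B, Matrix.mul_assoc B]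

lemma inv_mul_eq_mul_of_transpose_mul_mul_mul_eq [DecidableEq n] {U M : Matrix n n ℝ}
    {X Y : Matrix n k ℝ} (hU : Uᵀ * U = 1) (hM : IsUnit M.det) (h : Uᵀ * M * U * Y = Uᵀ * X) :
    M⁻¹ * X = U * Y := by
  have hU' : U * Uᵀ = 1 := mul_eq_one_comm.1 hU
  have hMUY : M * (U * Y) = X := by
    calc M * (U * Y) = U * (Uᵀ * M * U * Y) := by
          simp only [← Matrix.mul_assoc, hU', Matrix.one_mul]
      _ = X := by rw [h, ← Matrix.mul_assoc, hU', Matrix.one_mul]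
  rw [← hMUY, nonsing_inv_mul_cancel_left _ _ hM]

variable [Fintype k]

lemma transpose_mul_ridge_mul [DecidableEq m] [DecidableEq m']
    {U C : Matrix (m ⊕ m') (m ⊕ m') ℝ} (hU : Uᵀ * U = 1) {W : Matrix m k ℝ}
    {X : Matrix (m ⊕ m') k ℝ} (hX : X = U * fromRows W (0 : Matrix m' k ℝ)) (L : Matrix k k ℝ) :
    Uᵀ * (X * L * Xᵀ + C) * U =
      fromBlocks (W * L * Wᵀ + (Uᵀ * C * U).toBlocks₁₁) (Uᵀ * C * U).toBlocks₁₂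
        (Uᵀ * C * U).toBlocks₂₁ (Uᵀ * C * U).toBlocks₂₂ := by
  have hW : fromRows W (0 : Matrix m' k ℝ) * L * (fromRows W (0 : Matrix m' k ℝ))ᵀ =
      fromBlocks (W * L * Wᵀ) 0 0 0 := by
    simp [transpose_fromRows, fromRows_mul, ← fromCols_fromRows_eq_fromBlocks]
  have hsplit : Uᵀ * (X * L * Xᵀ + C) * U =
      fromRows W (0 : Matrix m' k ℝ) * L * (fromRows W (0 : Matrix m' k ℝ))ᵀ + Uᵀ * C * U := by
    rw [hX, Matrix.transpose_mul]
    simp only [Matrix.mul_add, Matrix.add_mul, ← Matrix.mul_assoc, hU, Matrix.one_mul]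
    simp only [Matrix.mul_assoc, hU, Matrix.mul_one]
  rw [hsplit, hW]
  conv_lhs => rw [← fromBlocks_toBlocks (Uᵀ * C * U)]
  rw [fromBlocks_add]
  simp

lemma inv_ridge_mul_eq_mul_fromRows [DecidableEq m] [DecidableEq m']
    {U C Ct : Matrix (m ⊕ m') (m ⊕ m') ℝ} (hU : Uᵀ * U = 1) (hC : C.PosDef)
    (hCt : Ct = Uᵀ * C * U) {L : Matrix k k ℝ} (hL : L.PosSemidef) {W : Matrix m k ℝ}
    {X : Matrix (m ⊕ m') k ℝ} (hX : X = U * fromRows W (0 : Matrix m' k ℝ)) {F : Matrix m m ℝ}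
    (hF : F = W * L * Wᵀ + Ct.toBlocks₁₁ - Ct.toBlocks₁₂ * Ct.toBlocks₂₂⁻¹ * Ct.toBlocks₁₂ᵀ)
    (hFdet : IsUnit F.det) :
    (X * L * Xᵀ + C)⁻¹ * X =
      U * fromRows (F⁻¹ * W) (-(Ct.toBlocks₂₂⁻¹ * Ct.toBlocks₁₂ᵀ * (F⁻¹ * W))) := by
  have hM : (X * L * Xᵀ + C).PosDef := by
    simpa only [conjTranspose_eq_transpose_of_trivial] using
      PosDef.posSemidef_add (hL.mul_mul_conjTranspose_same X) hC
  have hCt' : Ct.PosDef := hCt ▸ hC.transpose_mul_mul_of_isUnit (.of_mul_eq_one_right _ hU)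
  have hblock := fromBlocks_mul_fromRows_schur hCt'.toBlocks₂₂.det_pos.ne'.isUnit (hF ▸ hFdet) W
  rw [← hF] at hblock
  refine inv_mul_eq_mul_of_transpose_mul_mul_mul_eq hU hM.det_pos.ne'.isUnit ?_
  rw [transpose_mul_ridge_mul hU hX, ← hCt, toBlocks₂₁_eq_transpose_toBlocks₁₂ hCt'.transpose_eq,
    hblock, hX, ← Matrix.mul_assoc, hU, Matrix.one_mul]

end Matrix

theorem inv_ridge_mulVec_norm_bounds_general (p r : ℕ) (d l : Fin p → ℝ)
    (hd : ∀ i, 0 < d i) (a δ : ℝ) (ha : 0 < a) (hδ : 0 < δ)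
    (hl : ∀ i, a ≤ l i ∧ l i ≤ 1 / a)
    (U : Matrix (Fin p ⊕ Fin r) (Fin p ⊕ Fin r) ℝ) (hU : Uᵀ * U = 1)
    (V : Matrix (Fin p) (Fin p) ℝ) (hV : Vᵀ * V = 1)
    (C : Matrix (Fin p ⊕ Fin r) (Fin p ⊕ Fin r) ℝ) (hC : C.PosDef)
    (X : Matrix (Fin p ⊕ Fin r) (Fin p) ℝ)
    (hX : X = U * Matrix.fromRows (Matrix.diagonal d) (0 : Matrix (Fin r) (Fin p) ℝ) * Vᵀ)
    (β : Fin p → ℝ)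
    (Ct : Matrix (Fin p ⊕ Fin r) (Fin p ⊕ Fin r) ℝ) (hCt : Ct = Uᵀ * C * U)
    (Dt : Matrix (Fin p) (Fin p) ℝ)
    (hDt : Dt = Matrix.diagonal d * Vᵀ * (δ ^ 2 • Matrix.diagonal l) * V * Matrix.diagonal d)
    (hDtH : Dt.IsHermitian)
    (F : Matrix (Fin p) (Fin p) ℝ)
    (hF : F = Dt + Ct.toBlocks₁₁ - Ct.toBlocks₁₂ * Ct.toBlocks₂₂⁻¹ * Ct.toBlocks₁₂ᵀ) :
    (∑ i, (((X * (δ ^ 2 • Matrix.diagonal l) * Xᵀ + C)⁻¹ * X).mulVec β i) ^ 2 ≤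
        (1 + ‖Ct.toBlocks₁₂ * Ct.toBlocks₂₂⁻¹‖ ^ 2) *
          (β ⬝ᵥ (V * Matrix.diagonal d * F⁻¹ * F⁻¹ * Matrix.diagonal d * Vᵀ).mulVec β)) ∧
      β ⬝ᵥ (V * Matrix.diagonal d * F⁻¹ * F⁻¹ * Matrix.diagonal d * Vᵀ).mulVec β ≤
        ((⨆ i, d i) ^ 2 / (⨅ i, hDtH.eigenvalues i) ^ 2) * ∑ i, β i ^ 2 := by
  set L := δ ^ 2 • diagonal l
  have hL : L.PosDef := (posDef_diagonal_iff.2 fun i => ha.trans_le (hl i).1).smul (by positivity)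
  have hW : IsUnit (diagonal d * Vᵀ) :=
    (isUnit_diagonal.2 (Pi.isUnit_iff.2 fun i => (hd i).ne'.isUnit)).mul (.of_mul_eq_one _ hV)
  have hDL : Dt = diagonal d * Vᵀ * L * (diagonal d * Vᵀ)ᵀ := by
    rw [hDt, Matrix.transpose_mul, diagonal_transpose, Matrix.transpose_transpose]
    simp only [Matrix.mul_assoc]
  have hDt' : Dt.PosDef := by
    simpa only [Matrix.transpose_transpose, ← hDL] using
      hL.transpose_mul_mul_of_isUnit ((isUnit_transpose _).2 hW)
  have hCt' : Ct.PosDef := hCt ▸ hC.transpose_mul_mul_of_isUnit (.of_mul_eq_one_right _ hU)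
  have hS := hCt'.posSemidef_toBlocks₁₁_sub
  have hFS : F = Dt + (Ct.toBlocks₁₁ - Ct.toBlocks₁₂ * Ct.toBlocks₂₂⁻¹ * Ct.toBlocks₁₂ᵀ) := by
    rw [hF, add_sub_assoc]
  have hF' : F.PosDef := hFS ▸ hDt'.add_posSemidef hS
  have hXW : X = U * fromRows (diagonal d * Vᵀ) (0 : Matrix (Fin r) (Fin p) ℝ) := by
    rw [hX, Matrix.mul_assoc, fromRows_mul, Matrix.zero_mul]
  have hMinvX := inv_ridge_mul_eq_mul_fromRows hU hC hCt hL.posSemidef hXW (by rw [hF, hDL])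
    hF'.det_pos.ne'.isUnit
  have hQ : β ⬝ᵥ (V * diagonal d * F⁻¹ * F⁻¹ * diagonal d * Vᵀ) *ᵥ β =
      ∑ i, ((F⁻¹ * (diagonal d * Vᵀ)) *ᵥ β) i ^ 2 := by
    rw [sum_sq_mulVec_eq_dotProduct_mulVec, Matrix.transpose_mul, transpose_nonsing_inv,
      hF'.transpose_eq, Matrix.transpose_mul, diagonal_transpose, Matrix.transpose_transpose]
    simp only [Matrix.mul_assoc]
  refine ⟨?_, ?_⟩
  · have hK : ‖Ct.toBlocks₂₂⁻¹ * Ct.toBlocks₁₂ᵀ‖ = ‖Ct.toBlocks₁₂ * Ct.toBlocks₂₂⁻¹‖ := by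
      rw [← l2_opNorm_transpose, Matrix.transpose_mul, Matrix.transpose_transpose,
        transpose_nonsing_inv, hCt'.toBlocks₂₂.transpose_eq]
    rw [hMinvX, ← mulVec_mulVec, sum_sq_mulVec_of_transpose_mul_self_eq_one hU, hQ, ← hK]
    exact sum_sq_fromRows_neg_mul_mulVec_le _ _ β
  · rw [hQ, ← mulVec_mulVec, hFS, div_mul_eq_mul_div]
    refine (hDt'.sum_sq_inv_add_mulVec_le hS _).trans ?_
    gcongr
    rw [← mulVec_mulVec, ← sum_sq_mulVec_of_transpose_mul_self_eq_one
      (by rw [Matrix.transpose_transpose]; exact mul_eq_one_comm.1 hV) β]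
    exact sum_sq_diagonal_mulVec_le (fun i => (hd i).le) _

/-- Under the SVD/block setup (with `X = U [D; 0] Vᵀ`, `C̃ = UᵀCU`,
`D̃ = D Vᵀ (δ²Λ) V D`, `F = D̃ + C̃₁₁ - C̃₁₂ C̃₂₂⁻¹ C̃₁₂ᵀ`), one has
`‖(X δ²Λ Xᵀ + C)⁻¹ X β⁰‖² ≤ (1 + ‖C̃₁₂ C̃₂₂⁻¹‖²) · β⁰ᵀ V D F⁻² D Vᵀ β⁰`, and
`β⁰ᵀ V D F⁻² D Vᵀ β⁰ ≤ (λ_max(D)² / λ_min(D̃)²) ‖β⁰‖²`. -/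
theorem inv_ridge_mulVec_norm_bounds (p r : ℕ) (d l : Fin p → ℝ)
    (hd : ∀ i, 0 < d i) (a δ : ℝ) (ha : 0 < a) (ha1 : a ≤ 1) (hδ : 0 < δ)
    (hl : ∀ i, a ≤ l i ∧ l i ≤ 1 / a)
    (U : Matrix (Fin p ⊕ Fin r) (Fin p ⊕ Fin r) ℝ) (hU : Uᵀ * U = 1)
    (V : Matrix (Fin p) (Fin p) ℝ) (hV : Vᵀ * V = 1)
    (C : Matrix (Fin p ⊕ Fin r) (Fin p ⊕ Fin r) ℝ) (hC : C.PosDef)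
    (X : Matrix (Fin p ⊕ Fin r) (Fin p) ℝ)
    (hX : X = U * Matrix.fromRows (Matrix.diagonal d) (0 : Matrix (Fin r) (Fin p) ℝ) * Vᵀ)
    (β : Fin p → ℝ)
    (Ct : Matrix (Fin p ⊕ Fin r) (Fin p ⊕ Fin r) ℝ) (hCt : Ct = Uᵀ * C * U)
    (Dt : Matrix (Fin p) (Fin p) ℝ)
    (hDt : Dt = Matrix.diagonal d * Vᵀ * (δ ^ 2 • Matrix.diagonal l) * V * Matrix.diagonal d)
    (hDtH : Dt.IsHermitian)
    (F : Matrix (Fin p) (Fin p) ℝ)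
    (hF : F = Dt + Ct.toBlocks₁₁ - Ct.toBlocks₁₂ * Ct.toBlocks₂₂⁻¹ * Ct.toBlocks₁₂ᵀ) :
    (∑ i, (((X * (δ ^ 2 • Matrix.diagonal l) * Xᵀ + C)⁻¹ * X).mulVec β i) ^ 2 ≤
        (1 + ‖Ct.toBlocks₁₂ * Ct.toBlocks₂₂⁻¹‖ ^ 2) *
          (β ⬝ᵥ (V * Matrix.diagonal d * F⁻¹ * F⁻¹ * Matrix.diagonal d * Vᵀ).mulVec β)) ∧
      β ⬝ᵥ (V * Matrix.diagonal d * F⁻¹ * F⁻¹ * Matrix.diagonal d * Vᵀ).mulVec β ≤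
        ((⨆ i, d i) ^ 2 / (⨅ i, hDtH.eigenvalues i) ^ 2) * ∑ i, β i ^ 2 :=
  inv_ridge_mulVec_norm_bounds_general p r d l hd a δ ha hδ hl U hU V hV C hC X hX β Ct hCt Dt hDt
    hDtH F hF
end

section
/- Let ε₂ ∼ N(0, τ² I_{N−p}) and let T be a finite family of (N−p)×p matrices A with rank(A) ≤ min(k, p) and ‖A‖ ≤ c. Then E[max_{A∈T} ‖A^⊤ε₂‖²] ≤ 2c²τ²p + c²τ²|T|·8e^{-p/8}. -/
/-! For each `A`, a Chernoff bound with `s = (4c²τ²)⁻¹` controls the excess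
`(‖Aᵀε‖² - 2c²τ²p)₊` by `e^{-1-p/2} s⁻¹ E exp(s‖Aᵀε‖²)`. The exponential moment is computed by
linearising the square with an independent standard Gaussian `g ∈ ℝᵖ` (Hubbard–Stratonovich):
`E_ε exp(s‖Aᵀε‖²) = E_g E_ε exp(√(2s)⟨ε, Ag⟩) = E_g exp(sτ²‖Ag‖²) ≤ E_g exp(‖g‖²/4) = 2^{p/2}`,
since `‖Ag‖ ≤ c‖g‖`. Hence `E(‖Aᵀε‖² - 2c²τ²p)₊ ≤ 4c²τ² e^{-1-p/2} 2^{p/2} ≤ 8c²τ² e^{-p/8}`, and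
the maximum over `T` is at most `2c²τ²p` plus the sum of the excesses. -/

open Matrix MeasureTheory ProbabilityTheory Real
open scoped Matrix.Norms.L2Operator NNReal ENNReal

theorem lintegral_fintype_prod_eq_prod {ι : Type*} [Fintype ι] {E : ι → Type*}
    [∀ i, MeasurableSpace (E i)]
    (μ : ∀ i, Measure (E i)) [∀ i, IsProbabilityMeasure (μ i)] (f : ∀ i, E i → ℝ≥0∞)
    (hf : ∀ i, Measurable (f i)) :
    ∫⁻ x, ∏ i, f i (x i) ∂Measure.pi μ = ∏ i, ∫⁻ y, f i y ∂μ i := by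
  rw [lintegral_prod_eq_prod_lintegral_of_indepFun _ _
    (iIndepFun_pi fun i => (hf i).aemeasurable) fun i => (hf i).comp (measurable_pi_apply i)]
  refine Finset.prod_congr rfl fun i _ => ?_
  exact (measurePreserving_eval μ i).lintegral_comp (hf i)

theorem lintegral_exp_mul_gaussianReal (μ : ℝ) (v : ℝ≥0) (t : ℝ) :
    ∫⁻ x, ENNReal.ofReal (exp (t * x)) ∂gaussianReal μ v =
      ENNReal.ofReal (exp (μ * t + v * t ^ 2 / 2)) := by
  rw [← ofReal_integral_eq_lintegral_ofReal (integrable_exp_mul_gaussianReal t)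
    (ae_of_all _ fun x => (exp_pos _).le), ← congrFun mgf_id_gaussianReal t]
  rfl

theorem lintegral_exp_sum_mul_pi_gaussianReal {ι : Type*} [Fintype ι] (v : ℝ≥0) (a : ι → ℝ) :
    ∫⁻ x, ENNReal.ofReal (exp (∑ i, a i * x i)) ∂Measure.pi (fun _ : ι => gaussianReal 0 v) =
      ENNReal.ofReal (exp (v * (∑ i, a i ^ 2) / 2)) := by
  simp_rw [exp_sum, ENNReal.ofReal_prod_of_nonneg fun _ _ => (exp_pos _).le]
  rw [lintegral_fintype_prod_eq_prod _ (fun i y => ENNReal.ofReal (exp (a i * y)))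
    fun i => by fun_prop]
  simp only [lintegral_exp_mul_gaussianReal, zero_mul, zero_add]
  rw [← ENNReal.ofReal_prod_of_nonneg fun _ _ => (exp_pos _).le, ← exp_sum, Finset.mul_sum,
    Finset.sum_div]

theorem lintegral_exp_mul_sq_gaussianReal {a : ℝ} (ha : a < 1 / 2) :
    ∫⁻ x, ENNReal.ofReal (exp (a * x ^ 2)) ∂gaussianReal 0 1 =
      ENNReal.ofReal (√(1 - 2 * a)⁻¹) := by
  have hb : 0 < 1 / 2 - a := by linarith
  have hdensity : ∀ x : ℝ, gaussianPDF 0 1 x * ENNReal.ofReal (exp (a * x ^ 2)) =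
      ENNReal.ofReal ((√(2 * π))⁻¹ * exp (-(1 / 2 - a) * x ^ 2)) := by
    intro x
    rw [gaussianPDF, ← ENNReal.ofReal_mul (gaussianPDFReal_nonneg _ _ _), gaussianPDFReal,
      mul_assoc, ← exp_add]
    congr 3
    · simp
    · push_cast
      ring
  rw [gaussianReal_of_var_ne_zero _ one_ne_zero,
    lintegral_withDensity_eq_lintegral_mul _ (measurable_gaussianPDF _ _) (by fun_prop)]
  simp only [Pi.mul_apply, hdensity]
  rw [← ofReal_integral_eq_lintegral_ofReal ((integrable_exp_neg_mul_sq hb).const_mul _)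
    (ae_of_all _ fun x => by positivity), integral_const_mul, integral_gaussian,
    ← sqrt_inv, ← sqrt_mul (by positivity)]
  congr 2
  field_simp

theorem lintegral_exp_mul_sum_sq_pi_gaussianReal {ι : Type*} [Fintype ι] {a : ℝ}
    (ha : a < 1 / 2) :
    ∫⁻ g, ENNReal.ofReal (exp (a * ∑ i, g i ^ 2)) ∂Measure.pi (fun _ : ι => gaussianReal 0 1) =
      ENNReal.ofReal (√(1 - 2 * a)⁻¹) ^ Fintype.card ι := by
  simp_rw [Finset.mul_sum, exp_sum, ENNReal.ofReal_prod_of_nonneg fun _ _ => (exp_pos _).le]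
  rw [lintegral_fintype_prod_eq_prod _ (fun _ y => ENNReal.ofReal (exp (a * y ^ 2)))
    fun _ => by fun_prop]
  simp only [lintegral_exp_mul_sq_gaussianReal ha, Finset.prod_const, Finset.card_univ]

theorem sum_sq_mulVec_le {m n : Type*} [Fintype m] [Fintype n] [DecidableEq n]
    (A : Matrix m n ℝ) (g : n → ℝ) :
    ∑ i, (A *ᵥ g) i ^ 2 ≤ ‖A‖ ^ 2 * ∑ j, g j ^ 2 := by
  have h := pow_le_pow_left₀ (norm_nonneg _) (A.l2_opNorm_mulVec (WithLp.toLp 2 g)) 2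
  rwa [mul_pow, EuclideanSpace.real_norm_sq_eq, EuclideanSpace.real_norm_sq_eq] at h

theorem lintegral_exp_mul_sum_sq_mulVec_transpose_le {m n : Type*} [Fintype m] [Fintype n]
    [DecidableEq n] (A : Matrix m n ℝ) (v : ℝ≥0) {s : ℝ} (hs : 0 ≤ s) :
    ∫⁻ x, ENNReal.ofReal (exp (s * ∑ j, (Aᵀ *ᵥ x) j ^ 2))
        ∂Measure.pi (fun _ : m => gaussianReal 0 v) ≤
      ∫⁻ g, ENNReal.ofReal (exp (s * v * ‖A‖ ^ 2 * ∑ j, g j ^ 2))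
        ∂Measure.pi (fun _ : n => gaussianReal 0 1) := by
  set a := √(2 * s)
  have ha : a ^ 2 = 2 * s := sq_sqrt (by positivity)
  have linearise : ∀ y : n → ℝ, ENNReal.ofReal (exp (s * ∑ j, y j ^ 2)) =
      ∫⁻ g, ENNReal.ofReal (exp (∑ j, a * y j * g j))
        ∂Measure.pi (fun _ : n => gaussianReal 0 1) := by
    intro y
    rw [lintegral_exp_sum_mul_pi_gaussianReal]
    simp only [mul_pow, ha, ← Finset.mul_sum]
    congr 2
    push_cast
    ring
  have transpose : ∀ x g, ∑ j, a * (Aᵀ *ᵥ x) j * g j = ∑ i, a * (A *ᵥ g) i * x i := by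
    intro x g
    simp only [mul_assoc, ← Finset.mul_sum]
    change a * (Aᵀ *ᵥ x ⬝ᵥ g) = a * (A *ᵥ g ⬝ᵥ x)
    rw [mulVec_transpose, ← dotProduct_mulVec, dotProduct_comm]
  have inner : ∀ g : n → ℝ, ∫⁻ x, ENNReal.ofReal (exp (∑ j, a * (Aᵀ *ᵥ x) j * g j))
      ∂Measure.pi (fun _ : m => gaussianReal 0 v) =
        ENNReal.ofReal (exp (s * v * ∑ i, (A *ᵥ g) i ^ 2)) := by
    intro g
    simp only [transpose, lintegral_exp_sum_mul_pi_gaussianReal, mul_pow, ha, ← Finset.mul_sum]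
    congr 2
    ring
  calc _ = ∫⁻ x, ∫⁻ g, ENNReal.ofReal (exp (∑ j, a * (Aᵀ *ᵥ x) j * g j))
        ∂Measure.pi (fun _ : n => gaussianReal 0 1)
          ∂Measure.pi (fun _ : m => gaussianReal 0 v) := by
        simp only [linearise]
    _ = ∫⁻ g, ENNReal.ofReal (exp (s * v * ∑ i, (A *ᵥ g) i ^ 2))
        ∂Measure.pi (fun _ : n => gaussianReal 0 1) := by
        rw [lintegral_lintegral_swap (by fun_prop)]
        simp only [inner]
    _ ≤ _ := by
        refine lintegral_mono fun g => ENNReal.ofReal_le_ofReal (exp_le_exp.2 ?_)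
        rw [mul_assoc _ (‖A‖ ^ 2)]
        exact mul_le_mul_of_nonneg_left (sum_sq_mulVec_le A g) (by positivity)

theorem lintegral_ofReal_sub_le_mul_lintegral_exp {α : Type*} [MeasurableSpace α] (μ : Measure α)
    (f : α → ℝ) (B : ℝ) {s : ℝ} (hs : 0 < s) :
    ∫⁻ x, ENNReal.ofReal (f x - B) ∂μ ≤
      ENNReal.ofReal (exp (-(s * B) - 1) / s) * ∫⁻ x, ENNReal.ofReal (exp (s * f x)) ∂μ := by
  rw [← lintegral_const_mul' _ _ ENNReal.ofReal_ne_top]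
  refine lintegral_mono fun x => ?_
  rw [← ENNReal.ofReal_mul (by positivity)]
  refine ENNReal.ofReal_le_ofReal ?_
  have := add_one_le_exp (s * (f x - B) - 1)
  calc f x - B ≤ exp (s * (f x - B) - 1) / s := by rw [le_div_iff₀ hs]; linarith
    _ = exp (-(s * B) - 1) / s * exp (s * f x) := by
      rw [show s * (f x - B) - 1 = -(s * B) - 1 + s * f x by ring, exp_add]
      ring

theorem exp_neg_half_sub_one_mul_sqrt_two_pow_le (p : ℕ) :
    exp (-(p / 2) - 1) * √2 ^ p ≤ 2 * exp (-p / 8) := by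
  have hsqrt : √2 ^ p = exp (p * (log 2 / 2)) := by
    rw [← log_sqrt zero_le_two, exp_nat_mul, exp_log (by positivity)]
  rw [hsqrt, ← exp_add, ← exp_log two_pos, ← exp_add, exp_le_exp, exp_log two_pos]
  nlinarith [log_two_lt_d9, log_pos one_lt_two, p.cast_nonneg (α := ℝ)]

theorem lintegral_ofReal_sum_sq_mulVec_transpose_sub_le {m n : Type*} [Fintype m] [Fintype n]
    [DecidableEq n] (A : Matrix m n ℝ) (v : ℝ≥0) {c : ℝ} (hc : 0 ≤ c) (hA : ‖A‖ ≤ c) :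
    ∫⁻ x, ENNReal.ofReal (∑ j, (Aᵀ *ᵥ x) j ^ 2 - 2 * c ^ 2 * v * Fintype.card n)
        ∂Measure.pi (fun _ : m => gaussianReal 0 v) ≤
      ENNReal.ofReal (c ^ 2 * v * (8 * exp (-Fintype.card n / 8))) := by
  rcases hc.eq_or_lt with rfl | hc
  · simp [norm_le_zero_iff.1 hA]
  rcases eq_or_ne v 0 with rfl | hv0
  · simp [gaussianReal_zero_var, ← Measure.infinitePi_eq_pi, ← Pi.zero_def]
  have hv : (0 : ℝ) < v := by positivity
  obtain ⟨s, hs_def⟩ : ∃ s, s = (4 * c ^ 2 * v)⁻¹ := ⟨_, rfl⟩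
  have hs : 0 < s := by rw [hs_def]; positivity
  have hsA : s * v * ‖A‖ ^ 2 ≤ 1 / 4 :=
    calc s * v * ‖A‖ ^ 2 ≤ s * v * c ^ 2 := by gcongr
      _ = 1 / 4 := by rw [hs_def]; field_simp
  have hsB : s * (2 * c ^ 2 * v * Fintype.card n) = Fintype.card n / 2 := by
    rw [hs_def]; field_simp; ring
  calc _ ≤ ENNReal.ofReal (exp (-(s * (2 * c ^ 2 * v * Fintype.card n)) - 1) / s) *
        ∫⁻ x, ENNReal.ofReal (exp (s * ∑ j, (Aᵀ *ᵥ x) j ^ 2))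
          ∂Measure.pi (fun _ : m => gaussianReal 0 v) :=
        lintegral_ofReal_sub_le_mul_lintegral_exp _ _ _ hs
    _ ≤ ENNReal.ofReal (exp (-(s * (2 * c ^ 2 * v * Fintype.card n)) - 1) / s) *
        ∫⁻ g, ENNReal.ofReal (exp (1 / 4 * ∑ j, g j ^ 2))
          ∂Measure.pi (fun _ : n => gaussianReal 0 1) := by
        gcongr
        refine (lintegral_exp_mul_sum_sq_mulVec_transpose_le A v hs.le).trans ?_
        gcongr
    _ = ENNReal.ofReal (4 * c ^ 2 * v *
          (exp (-(Fintype.card n / 2) - 1) * √2 ^ Fintype.card n)) := by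
        rw [lintegral_exp_mul_sum_sq_pi_gaussianReal (by norm_num),
          ← ENNReal.ofReal_pow (by positivity), ← ENNReal.ofReal_mul (by positivity), hsB,
          show √(1 - 2 * (1 / 4 : ℝ))⁻¹ = √2 by norm_num, div_eq_mul_inv, hs_def, inv_inv]
        ring_nf
    _ ≤ ENNReal.ofReal (4 * c ^ 2 * v * (2 * exp (-Fintype.card n / 8))) :=
        ENNReal.ofReal_le_ofReal <| mul_le_mul_of_nonneg_left
          (exp_neg_half_sub_one_mul_sqrt_two_pow_le _) (by positivity)
    _ = _ := by ring_nf

-- `ENNReal.ofReal (f i x - B)` is the positive part `(f i x - B)₊`.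
theorem integral_finset_sup'_le_add_card_mul {α ι : Type*} [MeasurableSpace α] {μ : Measure α}
    [IsProbabilityMeasure μ] {T : Finset ι} (hT : T.Nonempty) {f : ι → α → ℝ} {B K : ℝ}
    (hf_nonneg : ∀ i ∈ T, ∀ x, 0 ≤ f i x) (hf : ∀ i ∈ T, Measurable (f i)) (hB : 0 ≤ B)
    (hK : 0 ≤ K) (h : ∀ i ∈ T, ∫⁻ x, ENNReal.ofReal (f i x - B) ∂μ ≤ ENNReal.ofReal K) :
    ∫ x, T.sup' hT (f · x) ∂μ ≤ B + T.card * K := by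
  have hsup_nonneg : ∀ x, 0 ≤ T.sup' hT (f · x) := fun x =>
    (hf_nonneg _ hT.choose_spec x).trans (T.le_sup' (f · x) hT.choose_spec)
  have hsup_le : ∀ x, ENNReal.ofReal (T.sup' hT (f · x)) ≤
      ENNReal.ofReal B + ∑ i ∈ T, ENNReal.ofReal (f i x - B) := by
    intro x
    obtain ⟨i, hi, hsup⟩ := T.exists_mem_eq_sup' hT (f · x)
    calc ENNReal.ofReal (T.sup' hT (f · x)) = ENNReal.ofReal (B + (f i x - B)) := by
          rw [hsup, add_sub_cancel]
      _ ≤ ENNReal.ofReal B + ENNReal.ofReal (f i x - B) := ENNReal.ofReal_add_le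
      _ ≤ _ := by
          gcongr
          exact T.single_le_sum (f := fun j => ENNReal.ofReal (f j x - B)) (fun _ _ => zero_le) hi
  have hmeas : ∀ i ∈ T, Measurable fun x => ENNReal.ofReal (f i x - B) :=
    fun i hi => ((hf i hi).sub_const B).ennreal_ofReal
  have hsup_meas : Measurable fun x => T.sup' hT (f · x) := by
    convert Finset.measurable_sup' hT hf with x
    exact (T.sup'_apply hT f x).symm
  rw [integral_eq_lintegral_of_nonneg_ae (ae_of_all _ hsup_nonneg) hsup_meas.aestronglyMeasurable]
  refine ENNReal.toReal_le_of_le_ofReal (by positivity) ?_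
  calc _ ≤ ∫⁻ x, ENNReal.ofReal B + ∑ i ∈ T, ENNReal.ofReal (f i x - B) ∂μ :=
        lintegral_mono hsup_le
    _ = ENNReal.ofReal B + ∑ i ∈ T, ∫⁻ x, ENNReal.ofReal (f i x - B) ∂μ := by
        rw [lintegral_add_left measurable_const, lintegral_const, measure_univ, mul_one,
          lintegral_finsetSum T hmeas]
    _ ≤ ENNReal.ofReal B + ∑ _i ∈ T, ENNReal.ofReal K := by gcongr with i hi; exact h i hi
    _ = ENNReal.ofReal (B + T.card * K) := by
        rw [Finset.sum_const, nsmul_eq_mul, ENNReal.ofReal_add hB (by positivity),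
          ENNReal.ofReal_mul (by positivity), ENNReal.ofReal_natCast]

theorem expected_max_gram_gaussian_le_general (r p : ℕ)
    (τ : NNReal) (c : ℝ) (hc : 0 ≤ c)
    (T : Finset (Matrix (Fin r) (Fin p) ℝ)) (hT : T.Nonempty)
    (hnorm : ∀ A ∈ T, ‖A‖ ≤ c) :
    ∫ ε, (T.sup' hT fun A => ∑ i, ((Aᵀ).mulVec ε i) ^ 2)
        ∂(Measure.pi fun _ : Fin r => gaussianReal 0 (τ ^ 2)) ≤
      2 * c ^ 2 * (τ : ℝ) ^ 2 * p +
        c ^ 2 * (τ : ℝ) ^ 2 * T.card * (8 * Real.exp (-(p : ℝ) / 8)) := by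
  have tail : ∀ A ∈ T,
      ∫⁻ ε, ENNReal.ofReal (∑ i, (Aᵀ *ᵥ ε) i ^ 2 - 2 * c ^ 2 * (τ : ℝ) ^ 2 * p)
        ∂(Measure.pi fun _ : Fin r => gaussianReal 0 (τ ^ 2)) ≤
        ENNReal.ofReal (c ^ 2 * (τ : ℝ) ^ 2 * (8 * exp (-(p : ℝ) / 8))) := fun A hA => by
    have := lintegral_ofReal_sum_sq_mulVec_transpose_sub_le A (τ ^ 2) hc (hnorm A hA)
    push_cast at this
    simpa using this
  calc _ ≤ 2 * c ^ 2 * (τ : ℝ) ^ 2 * p +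
        T.card * (c ^ 2 * (τ : ℝ) ^ 2 * (8 * exp (-(p : ℝ) / 8))) :=
        integral_finset_sup'_le_add_card_mul hT (fun _ _ _ => by positivity)
          (fun _ _ => by fun_prop) (by positivity) (by positivity) tail
    _ = _ := by ring

/-- For `ε₂ ∼ N(0, τ² I_{N-p})` and a finite family `T` of `(N-p) × p` matrices, each of
rank at most `min(k, p)` and operator norm at most `c`,
`E[max_{A ∈ T} ‖Aᵀ ε₂‖²] ≤ 2 c² τ² p + c² τ² |T| · 8 e^{-p/8}`. -/
theorem expected_max_gram_gaussian_le (r p k : ℕ) (hp : 0 < p)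
    (τ : NNReal) (c : ℝ) (hc : 0 ≤ c)
    (T : Finset (Matrix (Fin r) (Fin p) ℝ)) (hT : T.Nonempty)
    (hrank : ∀ A ∈ T, A.rank ≤ min k p) (hnorm : ∀ A ∈ T, ‖A‖ ≤ c) :
    ∫ ε, (T.sup' hT fun A => ∑ i, ((Aᵀ).mulVec ε i) ^ 2)
        ∂(Measure.pi fun _ : Fin r => gaussianReal 0 (τ ^ 2)) ≤
      2 * c ^ 2 * (τ : ℝ) ^ 2 * p +
        c ^ 2 * (τ : ℝ) ^ 2 * T.card * (8 * Real.exp (-(p : ℝ) / 8)) :=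
  expected_max_gram_gaussian_le_general r p τ c hc T hT hnorm
end
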